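/- Let B(m,n,h) be defined by B(m,n,0) = m(n+1) and B(m,n,h) = (m+h)(n^3+n^2+n+1) + h(n+1) + B((m+h)n^2,n,h-1) for h ≥ 1, and let C(s) = max{B(m,n,h)+h : m+n = s, 0 ≤ h ≤ n-1}. Then C(s) ≥ (s-1)((s+1)(s^2)^{s-1} + (s^3+s^2+s+1)·θ_{s-1}(s^2)) + (s-1) for all s ≥ 1, where θ_k(t) = 1+t+...+t^{k-1}. -/

import Mathlib

/-- The recursively defined bound `B(m,n,h)` from the paper. -/
def Bfun : ℕ → ℕ → ℕ → ℕ
  | m, n, 0 => m * (n + 1)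
  | m, n, h + 1 =>
      (m + (h + 1)) * (n ^ 3 + n ^ 2 + n + 1) + (h + 1) * (n + 1) +
        Bfun ((m + (h + 1)) * n ^ 2) n h

/-- `θ_k(t) = 1 + t + … + t^{k-1}`. -/
def theta (k t : ℕ) : ℕ := ∑ i ∈ Finset.range k, t ^ i

/-- `C(s) = max{B(m,n,h) + h : m + n = s, 0 ≤ h ≤ n - 1}`. -/
noncomputable def Cfun (s : ℕ) : ℕ :=
  sSup {x : ℕ | ∃ m n h : ℕ, m + n = s ∧ h + 1 ≤ n ∧ x = Bfun m n h + h}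

/-! Unfolding `B` along `h` gives the bound term by term: in the step `h + 1 → h` the first
argument `m + (h + 1)` is multiplied by `n²` (and grows by at least `h`), which turns
`(n + 1)(n²)^h` into `(n + 1)(n²)^(h+1)` and `θ_h(n²)` into `θ_{h+1}(n²) = 1 + n² θ_h(n²)`.
The theorem is this bound at the admissible triple `m = 0`, `n = s`, `h = s - 1`. -/

lemma theta_succ (k t : ℕ) : theta (k + 1) t = t * theta k t + 1 :=
  geom_sum_succ

lemma le_Bfun (m n h : ℕ) :
    (m + h) * ((n + 1) * (n ^ 2) ^ h + (n ^ 3 + n ^ 2 + n + 1) * theta h (n ^ 2)) ≤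
      Bfun m n h := by
  induction h generalizing m with
  | zero => simp [Bfun, theta]
  | succ h ih =>
    set P := n ^ 3 + n ^ 2 + n + 1
    set c := m + (h + 1)
    have hrec : c * n ^ 2 * ((n + 1) * (n ^ 2) ^ h + P * theta h (n ^ 2)) ≤
        Bfun (c * n ^ 2) n h :=
      (Nat.mul_le_mul_right _ (Nat.le_add_right _ h)).trans (ih (c * n ^ 2))
    calc c * ((n + 1) * (n ^ 2) ^ (h + 1) + P * theta (h + 1) (n ^ 2))
        = c * P + c * n ^ 2 * ((n + 1) * (n ^ 2) ^ h + P * theta h (n ^ 2)) := by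
          rw [theta_succ]; ring
      _ ≤ c * P + (h + 1) * (n + 1) + Bfun (c * n ^ 2) n h := by omega
      _ = Bfun m n (h + 1) := rfl

lemma bddAbove_Cfun_set (s : ℕ) :
    BddAbove {x : ℕ | ∃ m n h : ℕ, m + n = s ∧ h + 1 ≤ n ∧ x = Bfun m n h + h} := by
  let box := Set.Iic s ×ˢ Set.Iic s ×ˢ Set.Iic s
  have hfin : ((fun p : ℕ × ℕ × ℕ => Bfun p.1 p.2.1 p.2.2 + p.2.2) '' box).Finite :=
    ((Set.finite_Iic s).prod ((Set.finite_Iic s).prod (Set.finite_Iic s))).image _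
  refine (hfin.subset ?_).bddAbove
  rintro x ⟨m, n, h, hmn, hh, rfl⟩
  exact ⟨(m, n, h), by simp only [box, Set.mem_prod, Set.mem_Iic]; omega, rfl⟩

lemma le_Cfun {m n h s : ℕ} (hmn : m + n = s) (hh : h + 1 ≤ n) : Bfun m n h + h ≤ Cfun s :=
  le_csSup (bddAbove_Cfun_set s) ⟨m, n, h, hmn, hh, rfl⟩

/-- Lower bound for `C(s)`. -/
theorem Cfun_lower_bound (s : ℕ) (hs : 1 ≤ s) :
    (s - 1) * ((s + 1) * (s ^ 2) ^ (s - 1) +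
        (s ^ 3 + s ^ 2 + s + 1) * theta (s - 1) (s ^ 2)) + (s - 1) ≤ Cfun s := by
  have hB := le_Bfun 0 s (s - 1)
  rw [zero_add] at hB
  exact (Nat.add_le_add_right hB _).trans (le_Cfun (zero_add s) (by omega))
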